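/- arXiv:0910.5164 — 3 statements merged into one kernel-verified Lean document; each statement's English description precedes it below -/
import Mathlib

section
/- Let a, b ∈ ℝ³ be linearly independent vectors and let z₁, z₂ ∈ ℝ³ satisfy a · z₁ = 0, b · z₂ = 0, and a · z₂ + b · z₁ = 0. Then there exists a unique y ∈ ℝ³ such that y × a = z₁ and y × b = z₂. -/
/-!
Put `n = a × b` and `N = n · n`, which is nonzero since `a, b` are independent. Reading off the
coordinates of `y` in the basis `a, b, n` from `y × a` and `y × b` gives
`N y = ((y × b) · n) a - ((y × a) · n) b + (b · (y × a)) n`, so `y` is determined by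
`(y × a, y × b)`. Conversely, by the reciprocal-basis expansion
`N v = (v · a) (b × n) + (v · b) (n × a) + (v · n) n`, the three conditions on `z₁, z₂` are what
make `y = N⁻¹ ((z₂ · n) a - (z₁ · n) b + (b · z₁) n)` a solution.
-/

open Matrix

section CommRing

variable {R : Type*} [CommRing R] (a b : Fin 3 → R)

theorem smul_eq_reciprocal_basis_sum (v : Fin 3 → R) :
    ((a ⨯₃ b) ⬝ᵥ (a ⨯₃ b)) • v =
      (v ⬝ᵥ a) • (b ⨯₃ (a ⨯₃ b)) + (v ⬝ᵥ b) • ((a ⨯₃ b) ⨯₃ a) + (v ⬝ᵥ (a ⨯₃ b)) • (a ⨯₃ b) := by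
  simp_rw [cross_apply, vec3_dotProduct]
  ext i
  fin_cases i <;>
  · simp only [Fin.isValue, Fin.zero_eta, Fin.mk_one, Fin.reduceFinMk, cons_val, cons_val_zero,
      cons_val_one, Pi.add_apply, Pi.smul_apply, smul_eq_mul, smul_cons, smul_empty, add_cons,
      head_cons, tail_cons, empty_add_empty]
    ring

def rotationNumerator (z₁ z₂ : Fin 3 → R) : Fin 3 → R :=
  (z₂ ⬝ᵥ (a ⨯₃ b)) • a - (z₁ ⬝ᵥ (a ⨯₃ b)) • b + (b ⬝ᵥ z₁) • (a ⨯₃ b)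

theorem rotationNumerator_cross_cross (y : Fin 3 → R) :
    rotationNumerator a b (y ⨯₃ a) (y ⨯₃ b) = ((a ⨯₃ b) ⬝ᵥ (a ⨯₃ b)) • y := by
  simp_rw [rotationNumerator, cross_apply, vec3_dotProduct]
  ext i
  fin_cases i <;>
  · simp only [Fin.isValue, Fin.zero_eta, Fin.mk_one, Fin.reduceFinMk, cons_val, cons_val_zero,
      cons_val_one, Pi.add_apply, Pi.sub_apply, Pi.smul_apply, smul_eq_mul, smul_cons, smul_empty]
    ring

variable {a b}

theorem rotationNumerator_cross_left {z₁ : Fin 3 → R} (z₂ : Fin 3 → R) (h₁ : a ⬝ᵥ z₁ = 0) :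
    rotationNumerator a b z₁ z₂ ⨯₃ a = ((a ⨯₃ b) ⬝ᵥ (a ⨯₃ b)) • z₁ := by
  rw [smul_eq_reciprocal_basis_sum a b, dotProduct_comm, h₁, rotationNumerator]
  simp only [map_add, map_sub, map_smul, LinearMap.add_apply, LinearMap.sub_apply,
    LinearMap.smul_apply, cross_self, ← cross_anticomm b a, dotProduct_comm b]
  module

theorem rotationNumerator_cross_right {z₁ z₂ : Fin 3 → R} (h₂ : b ⬝ᵥ z₂ = 0)
    (h₃ : a ⬝ᵥ z₂ + b ⬝ᵥ z₁ = 0) :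
    rotationNumerator a b z₁ z₂ ⨯₃ b = ((a ⨯₃ b) ⬝ᵥ (a ⨯₃ b)) • z₂ := by
  rw [smul_eq_reciprocal_basis_sum a b, dotProduct_comm z₂ b, h₂, rotationNumerator,
    dotProduct_comm z₂ a, eq_neg_of_add_eq_zero_left h₃]
  simp only [map_add, map_sub, map_smul, LinearMap.add_apply, LinearMap.sub_apply,
    LinearMap.smul_apply, cross_self, ← cross_anticomm b (a ⨯₃ b)]
  module

end CommRing

/-- Pointwise Darboux rotation-field theorem: if `a, b` are linearly independent and
`a · z₁ = 0`, `b · z₂ = 0`, `a · z₂ + b · z₁ = 0`, then there is a unique `y` with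
`y × a = z₁` and `y × b = z₂`. -/
theorem exists_unique_rotation_vector (a b z₁ z₂ : Fin 3 → ℝ)
    (hab : LinearIndependent ℝ ![a, b])
    (h₁ : a ⬝ᵥ z₁ = 0) (h₂ : b ⬝ᵥ z₂ = 0) (h₃ : a ⬝ᵥ z₂ + b ⬝ᵥ z₁ = 0) :
    ∃! y : Fin 3 → ℝ, y ⨯₃ a = z₁ ∧ y ⨯₃ b = z₂ := by
  have hN : (a ⨯₃ b) ⬝ᵥ (a ⨯₃ b) ≠ 0 :=
    dotProduct_self_eq_zero.not.2 (crossProduct_ne_zero_iff_linearIndependent.2 hab)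
  refine ⟨((a ⨯₃ b) ⬝ᵥ (a ⨯₃ b))⁻¹ • rotationNumerator a b z₁ z₂, ⟨?_, ?_⟩, ?_⟩
  · rw [LinearMap.map_smul₂, rotationNumerator_cross_left z₂ h₁, inv_smul_smul₀ hN]
  · rw [LinearMap.map_smul₂, rotationNumerator_cross_right h₂ h₃, inv_smul_smul₀ hN]
  · rintro y ⟨rfl, rfl⟩
    rw [rotationNumerator_cross_cross, inv_smul_smul₀ hN]
end

section
/- Let r : D → ℝ³ be a smooth immersed surface patch on an open set D ⊆ ℝ² (so that r_u and r_v are linearly independent at every point) and let z : D → ℝ³ be a smooth vector field satisfying r_u · z_u = 0, r_u · z_v + r_v · z_u = 0, and r_v · z_v = 0 on D. Then there exists a unique vector field y : D → ℝ³ such that z_u = y × r_u and z_v = y × r_v on D. -/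
open Matrix

/-- Partial derivative in the `u`-direction. -/
noncomputable def pdu {E : Type*} [NormedAddCommGroup E] [NormedSpace ℝ E]
    (f : ℝ × ℝ → E) (p : ℝ × ℝ) : E := fderiv ℝ f p (1, 0)

/-- Partial derivative in the `v`-direction. -/
noncomputable def pdv {E : Type*} [NormedAddCommGroup E] [NormedSpace ℝ E]
    (f : ℝ × ℝ → E) (p : ℝ × ℝ) : E := fderiv ℝ f p (0, 1)

lemma aux_u (a b u v : Fin 3 → ℝ) (h1 : a ⬝ᵥ u = 0) :
    ((a ⨯₃ b) ⬝ᵥ (a ⨯₃ b)) • u =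
      (((a ⨯₃ b) ⬝ᵥ v) • a - ((a ⨯₃ b) ⬝ᵥ u) • b + (b ⬝ᵥ u) • (a ⨯₃ b)) ⨯₃ a := by
  simp only [dotProduct, Fin.sum_univ_three] at h1 ⊢
  funext i
  fin_cases i <;>
    simp [crossProduct, vecHead, vecTail, Fin.sum_univ_three, Pi.smul_apply, Pi.add_apply,
      Pi.sub_apply, smul_eq_mul]
  · linear_combination (-((a 0 * b 0 + a 1 * b 1 + a 2 * b 2) * b 0 -
      (b 0 * b 0 + b 1 * b 1 + b 2 * b 2) * a 0)) * h1
  · linear_combination (-((a 0 * b 0 + a 1 * b 1 + a 2 * b 2) * b 1 -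
      (b 0 * b 0 + b 1 * b 1 + b 2 * b 2) * a 1)) * h1
  · linear_combination (-((a 0 * b 0 + a 1 * b 1 + a 2 * b 2) * b 2 -
      (b 0 * b 0 + b 1 * b 1 + b 2 * b 2) * a 2)) * h1

lemma aux_v (a b u v : Fin 3 → ℝ) (h2 : a ⬝ᵥ v + b ⬝ᵥ u = 0) (h3 : b ⬝ᵥ v = 0) :
    ((a ⨯₃ b) ⬝ᵥ (a ⨯₃ b)) • v =
      (((a ⨯₃ b) ⬝ᵥ v) • a - ((a ⨯₃ b) ⬝ᵥ u) • b + (b ⬝ᵥ u) • (a ⨯₃ b)) ⨯₃ b := by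
  simp only [dotProduct, Fin.sum_univ_three] at h2 h3 ⊢
  funext i
  fin_cases i <;>
    simp [crossProduct, vecHead, vecTail, Fin.sum_univ_three, Pi.smul_apply, Pi.add_apply,
      Pi.sub_apply, smul_eq_mul]
  · linear_combination ((a 0 * a 0 + a 1 * a 1 + a 2 * a 2) * b 0 -
      (a 0 * b 0 + a 1 * b 1 + a 2 * b 2) * a 0) * h3 -
      ((a 0 * b 0 + a 1 * b 1 + a 2 * b 2) * b 0 -
      (b 0 * b 0 + b 1 * b 1 + b 2 * b 2) * a 0) * h2
  · linear_combination ((a 0 * a 0 + a 1 * a 1 + a 2 * a 2) * b 1 -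
      (a 0 * b 0 + a 1 * b 1 + a 2 * b 2) * a 1) * h3 -
      ((a 0 * b 0 + a 1 * b 1 + a 2 * b 2) * b 1 -
      (b 0 * b 0 + b 1 * b 1 + b 2 * b 2) * a 1) * h2
  · linear_combination ((a 0 * a 0 + a 1 * a 1 + a 2 * a 2) * b 2 -
      (a 0 * b 0 + a 1 * b 1 + a 2 * b 2) * a 2) * h3 -
      ((a 0 * b 0 + a 1 * b 1 + a 2 * b 2) * b 2 -
      (b 0 * b 0 + b 1 * b 1 + b 2 * b 2) * a 2) * h2

lemma aux_unique (a b w : Fin 3 → ℝ) (hd : a ⨯₃ b ≠ 0)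
    (h1 : w ⨯₃ a = 0) (h2 : w ⨯₃ b = 0) : w = 0 := by
  have h3 : w ⨯₃ (a ⨯₃ b) = 0 := by
    have hc := cross_cross w a b
    rw [h1, h2] at hc
    simpa using hc.symm
  have h4 : w ⬝ᵥ (a ⨯₃ b) = 0 := by
    rw [triple_product_permutation]
    rw [show b ⨯₃ w = -(w ⨯₃ b) from (cross_anticomm w b).symm, h2]
    simp
  have h5 := cross_dot_cross w (a ⨯₃ b) w (a ⨯₃ b)
  rw [h3] at h5
  simp only [zero_dotProduct, dotProduct_comm (a ⨯₃ b) w, h4, mul_zero] at h5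
  have hd' : (a ⨯₃ b) ⬝ᵥ (a ⨯₃ b) ≠ 0 := fun h => hd (dotProduct_self_eq_zero.mp h)
  have h6 : w ⬝ᵥ w * ((a ⨯₃ b) ⬝ᵥ (a ⨯₃ b)) = 0 := by linarith
  have : w ⬝ᵥ w = 0 := by
    rcases mul_eq_zero.mp h6 with h | h
    · exact h
    · exact absurd h hd'
  exact dotProduct_self_eq_zero.mp this

/-- Darboux's rotation field: for a smooth immersed surface patch `r` on an open set `D`
and an infinitesimal bending `z`, there is a unique (on `D`) vector field `y` with
`z_u = y × r_u` and `z_v = y × r_v`. -/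
theorem exists_unique_rotation_field (D : Set (ℝ × ℝ)) (hD : IsOpen D)
    (r z : ℝ × ℝ → (Fin 3 → ℝ))
    (hr : ContDiffOn ℝ (⊤ : ℕ∞) r D) (hz : ContDiffOn ℝ (⊤ : ℕ∞) z D)
    (himm : ∀ p ∈ D, LinearIndependent ℝ ![pdu r p, pdv r p])
    (hb₁ : ∀ p ∈ D, pdu r p ⬝ᵥ pdu z p = 0)
    (hb₂ : ∀ p ∈ D, pdu r p ⬝ᵥ pdv z p + pdv r p ⬝ᵥ pdu z p = 0)
    (hb₃ : ∀ p ∈ D, pdv r p ⬝ᵥ pdv z p = 0) :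
    ∃ y : ℝ × ℝ → (Fin 3 → ℝ),
      (∀ p ∈ D, pdu z p = y p ⨯₃ pdu r p ∧ pdv z p = y p ⨯₃ pdv r p) ∧
      ∀ y' : ℝ × ℝ → (Fin 3 → ℝ),
        (∀ p ∈ D, pdu z p = y' p ⨯₃ pdu r p ∧ pdv z p = y' p ⨯₃ pdv r p) →
        ∀ p ∈ D, y' p = y p := by
  set n : (ℝ × ℝ) → (Fin 3 → ℝ) := fun p => pdu r p ⨯₃ pdv r p with hn
  set y : (ℝ × ℝ) → (Fin 3 → ℝ) := fun p =>
    ((n p ⬝ᵥ n p)⁻¹ : ℝ) •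
      ((n p ⬝ᵥ pdv z p) • pdu r p - (n p ⬝ᵥ pdu z p) • pdv r p +
        (pdv r p ⬝ᵥ pdu z p) • n p) with hy
  have hnne : ∀ p ∈ D, n p ≠ 0 := fun p hp =>
    crossProduct_ne_zero_iff_linearIndependent.mpr (himm p hp)
  have hdne : ∀ p ∈ D, n p ⬝ᵥ n p ≠ 0 := fun p hp h =>
    hnne p hp (dotProduct_self_eq_zero.mp h)
  refine ⟨y, fun p hp => ?_, fun y' hy' p hp => ?_⟩
  · have hd := hdne p hp
    constructor
    · have h := aux_u (pdu r p) (pdv r p) (pdu z p) (pdv z p) (hb₁ p hp)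
      calc pdu z p = ((n p ⬝ᵥ n p)⁻¹ : ℝ) • ((n p ⬝ᵥ n p) • pdu z p) := by
            rw [smul_smul, inv_mul_cancel₀ hd, one_smul]
        _ = y p ⨯₃ pdu r p := by
            rw [hy]
            simp only [hn] at h ⊢
            rw [h, LinearMap.map_smul, LinearMap.smul_apply]
    · have h := aux_v (pdu r p) (pdv r p) (pdu z p) (pdv z p) (hb₂ p hp) (hb₃ p hp)
      calc pdv z p = ((n p ⬝ᵥ n p)⁻¹ : ℝ) • ((n p ⬝ᵥ n p) • pdv z p) := by
            rw [smul_smul, inv_mul_cancel₀ hd, one_smul]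
        _ = y p ⨯₃ pdv r p := by
            rw [hy]
            simp only [hn] at h ⊢
            rw [h, LinearMap.map_smul, LinearMap.smul_apply]
  · obtain ⟨hu', hv'⟩ := hy' p hp
    have h := hy' p hp
    -- y also satisfies the equations (reuse first part)
    have hyeq : pdu z p = y p ⨯₃ pdu r p ∧ pdv z p = y p ⨯₃ pdv r p := by
      have hd := hdne p hp
      constructor
      · have h := aux_u (pdu r p) (pdv r p) (pdu z p) (pdv z p) (hb₁ p hp)
        calc pdu z p = ((n p ⬝ᵥ n p)⁻¹ : ℝ) • ((n p ⬝ᵥ n p) • pdu z p) := by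
              rw [smul_smul, inv_mul_cancel₀ hd, one_smul]
          _ = y p ⨯₃ pdu r p := by
              rw [hy]
              simp only [hn] at h ⊢
              rw [h, LinearMap.map_smul, LinearMap.smul_apply]
      · have h := aux_v (pdu r p) (pdv r p) (pdu z p) (pdv z p) (hb₂ p hp) (hb₃ p hp)
        calc pdv z p = ((n p ⬝ᵥ n p)⁻¹ : ℝ) • ((n p ⬝ᵥ n p) • pdv z p) := by
              rw [smul_smul, inv_mul_cancel₀ hd, one_smul]
          _ = y p ⨯₃ pdv r p := by
              rw [hy]
              simp only [hn] at h ⊢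
              rw [h, LinearMap.map_smul, LinearMap.smul_apply]
    have e1 : (y' p - y p) ⨯₃ pdu r p = 0 := by
      rw [LinearMap.map_sub, LinearMap.sub_apply, ← hu', ← hyeq.1, sub_self]
    have e2 : (y' p - y p) ⨯₃ pdv r p = 0 := by
      rw [LinearMap.map_sub, LinearMap.sub_apply, ← hv', ← hyeq.2, sub_self]
    have := aux_unique (pdu r p) (pdv r p) (y' p - y p) (hnne p hp) e1 e2
    exact sub_eq_zero.mp this
end

section
/- Let D ⊂ ℝ² be a bounded domain with smooth boundary, f smooth, r(u,v) = (u,v,f(u,v)), z an infinitesimal bending with rotation field y and translation field s = z - y × r. Then the differential 1-form (s₁ + f_u s₃) du + (s₂ + f_v s₃) dv on D is closed, i.e., ∂_v(s₁ + f_u s₃) = ∂_u(s₂ + f_v s₃). -/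
open Matrix

private lemma pd_apply3 {g : ℝ × ℝ → (Fin 3 → ℝ)} {q : ℝ × ℝ} (hg : DifferentiableAt ℝ g q)
    (w : ℝ × ℝ) (i : Fin 3) :
    fderiv ℝ (fun x => g x i) q w = fderiv ℝ g q w i := by
  have h : HasFDerivAt (fun x => g x i)
      ((ContinuousLinearMap.proj (R := ℝ) (φ := fun _ : Fin 3 => ℝ) i).comp (fderiv ℝ g q)) q :=
    by simpa [Function.comp_def] using
      HasFDerivAt.comp q (ContinuousLinearMap.proj i).hasFDerivAt hg.hasFDerivAt
  rw [h.fderiv]; rfl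

private lemma pd_symm {g : ℝ × ℝ → ℝ} {p : ℝ × ℝ} (hg : ContDiffAt ℝ 2 g p) (w w' : ℝ × ℝ) :
    fderiv ℝ (fun q => fderiv ℝ g q w) p w' = fderiv ℝ (fun q => fderiv ℝ g q w') p w := by
  have hd : DifferentiableAt ℝ (fderiv ℝ g) p :=
    (hg.fderiv_right (m := 1) (by norm_num)).differentiableAt one_ne_zero
  have h1 : ∀ a : ℝ × ℝ, fderiv ℝ (fun q => fderiv ℝ g q a) p = (fderiv ℝ (fderiv ℝ g) p).flip a := by
    intro a
    rw [fderiv_clm_apply hd (differentiableAt_const a)]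
    simp
  rw [h1 w, h1 w']
  simp only [ContinuousLinearMap.flip_apply]
  exact hg.isSymmSndFDerivAt (by simp) w' w

private lemma pd_mul {a b : ℝ × ℝ → ℝ} {q : ℝ × ℝ} (ha : DifferentiableAt ℝ a q)
    (hb : DifferentiableAt ℝ b q) (w : ℝ × ℝ) :
    fderiv ℝ (fun x => a x * b x) q w = fderiv ℝ a q w * b q + a q * fderiv ℝ b q w := by
  rw [fderiv_fun_mul ha hb]; simp [mul_comm]; ring

private lemma pd_add {a b : ℝ × ℝ → ℝ} {q : ℝ × ℝ} (ha : DifferentiableAt ℝ a q)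
    (hb : DifferentiableAt ℝ b q) (w : ℝ × ℝ) :
    fderiv ℝ (fun x => a x + b x) q w = fderiv ℝ a q w + fderiv ℝ b q w := by
  rw [fderiv_fun_add ha hb]; rfl

private lemma pd_sub {a b : ℝ × ℝ → ℝ} {q : ℝ × ℝ} (ha : DifferentiableAt ℝ a q)
    (hb : DifferentiableAt ℝ b q) (w : ℝ × ℝ) :
    fderiv ℝ (fun x => a x - b x) q w = fderiv ℝ a q w - fderiv ℝ b q w := by
  rw [fderiv_fun_sub ha hb]; rfl

private lemma pd_neg {a : ℝ × ℝ → ℝ} {q : ℝ × ℝ} (w : ℝ × ℝ) :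
    fderiv ℝ (fun x => -(a x)) q w = -(fderiv ℝ a q w) := by
  rw [fderiv_fun_neg]; rfl

private lemma pd_fst {q : ℝ × ℝ} (w : ℝ × ℝ) :
    fderiv ℝ (fun x : ℝ × ℝ => x.1) q w = w.1 := by
  rw [show (fun x : ℝ × ℝ => x.1) = Prod.fst from rfl, fderiv_fst]; rfl

private lemma pd_snd {q : ℝ × ℝ} (w : ℝ × ℝ) :
    fderiv ℝ (fun x : ℝ × ℝ => x.2) q w = w.2 := by
  rw [show (fun x : ℝ × ℝ => x.2) = Prod.snd from rfl, fderiv_snd]; rfl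

/-- For a graph surface with an infinitesimal bending `z`, rotation field `y`, and
translation field `s = z - y × r`, the `1`-form `(s₁ + f_u s₃) du + (s₂ + f_v s₃) dv`
is closed. -/
theorem graph_translation_field_form_closed
    (D : Set (ℝ × ℝ)) (hD : IsOpen D)
    (f : ℝ × ℝ → ℝ) (hf : ContDiffOn ℝ (⊤ : ℕ∞) f D)
    (r z y s : ℝ × ℝ → (Fin 3 → ℝ))
    (hrdef : ∀ p, r p = ![p.1, p.2, f p])
    (hz : ContDiffOn ℝ (⊤ : ℕ∞) z D) (hy : ContDiffOn ℝ (⊤ : ℕ∞) y D)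
    (hb₁ : ∀ p ∈ D, pdu r p ⬝ᵥ pdu z p = 0)
    (hb₂ : ∀ p ∈ D, pdu r p ⬝ᵥ pdv z p + pdv r p ⬝ᵥ pdu z p = 0)
    (hb₃ : ∀ p ∈ D, pdv r p ⬝ᵥ pdv z p = 0)
    (hrot : ∀ p ∈ D, pdu z p = y p ⨯₃ pdu r p ∧ pdv z p = y p ⨯₃ pdv r p)
    (hsdef : ∀ p, s p = z p - y p ⨯₃ r p) :
    ∀ p ∈ D,
      pdv (fun q => s q 0 + pdu f q * s q 2) p =
        pdu (fun q => s q 1 + pdv f q * s q 2) p := by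
  intro p hp
  -- basic smoothness facts
  have hfc : ∀ q ∈ D, ContDiffAt ℝ (⊤ : ℕ∞) f q := fun q hq => hf.contDiffAt (hD.mem_nhds hq)
  have hzc : ∀ q ∈ D, ContDiffAt ℝ (⊤ : ℕ∞) z q := fun q hq => hz.contDiffAt (hD.mem_nhds hq)
  have hyc : ∀ q ∈ D, ContDiffAt ℝ (⊤ : ℕ∞) y q := fun q hq => hy.contDiffAt (hD.mem_nhds hq)
  have hfd : ∀ q ∈ D, DifferentiableAt ℝ f q := fun q hq => (hfc q hq).differentiableAt (by simp)
  have hzd : ∀ q ∈ D, DifferentiableAt ℝ z q := fun q hq => (hzc q hq).differentiableAt (by simp)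
  have hrd : ∀ q ∈ D, DifferentiableAt ℝ r q := by
    intro q hq
    rw [funext hrdef]
    apply differentiableAt_pi.2
    intro i
    fin_cases i <;> simp only [Matrix.cons_val_zero, Matrix.cons_val_one, Matrix.head_cons,
      Matrix.cons_val_two, Matrix.tail_cons]
    · exact differentiableAt_fst
    · exact differentiableAt_snd
    · exact hfd q hq
  -- component smoothness
  have hzic : ∀ (i : Fin 3), ∀ q ∈ D, ContDiffAt ℝ 2 (fun x => z x i) q := by
    intro i q hq
    exact (contDiffAt_pi.1 ((hzc q hq).of_le (WithTop.coe_le_coe.2 (le_top : (2 : ℕ∞) ≤ ⊤))) i)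
  have hzid : ∀ (i : Fin 3), ∀ q ∈ D, DifferentiableAt ℝ (fun x => z x i) q :=
    fun i q hq => (hzic i q hq).differentiableAt two_ne_zero
  have hyid : ∀ (i : Fin 3), ∀ q ∈ D, DifferentiableAt ℝ (fun x => y x i) q := by
    intro i q hq
    exact (contDiffAt_pi.1 ((hyc q hq).of_le (by exact_mod_cast (le_top : (1 : ℕ∞) ≤ ⊤))) i).differentiableAt one_ne_zero
  -- derivative of r components
  have hr0 : (fun x => r x 0) = (fun x : ℝ × ℝ => x.1) := by funext x; rw [hrdef]; rfl
  have hr1 : (fun x => r x 1) = (fun x : ℝ × ℝ => x.2) := by funext x; rw [hrdef]; rfl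
  have hr2 : (fun x => r x 2) = f := by funext x; rw [hrdef]; rfl
  have hrw : ∀ q ∈ D, ∀ w : ℝ × ℝ,
      fderiv ℝ r q w = ![w.1, w.2, fderiv ℝ f q w] := by
    intro q hq w
    funext i
    rw [← pd_apply3 (hrd q hq) w i]
    fin_cases i
    · show fderiv ℝ (fun x => r x 0) q w = w.1
      rw [hr0, pd_fst]
    · show fderiv ℝ (fun x => r x 1) q w = w.2
      rw [hr1, pd_snd]
    · show fderiv ℝ (fun x => r x 2) q w = fderiv ℝ f q w
      rw [hr2]
  -- the six first-order identities on D coming from the rotation field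
  have hzw1 : ∀ q ∈ D, ∀ i, fderiv ℝ (fun x => z x i) q (1,0) =
      (y q ⨯₃ ![1, 0, fderiv ℝ f q (1,0)]) i := by
    intro q hq i
    rw [pd_apply3 (hzd q hq)]
    rw [show fderiv ℝ z q (1,0) = pdu z q from rfl, (hrot q hq).1]
    have : pdu r q = fderiv ℝ r q (1,0) := rfl
    rw [this, hrw q hq]
  have hzw2 : ∀ q ∈ D, ∀ i, fderiv ℝ (fun x => z x i) q (0,1) =
      (y q ⨯₃ ![0, 1, fderiv ℝ f q (0,1)]) i := by
    intro q hq i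
    rw [pd_apply3 (hzd q hq)]
    rw [show fderiv ℝ z q (0,1) = pdv z q from rfl, (hrot q hq).2]
    have : pdv r q = fderiv ℝ r q (0,1) := rfl
    rw [this, hrw q hq]
  have hzu0 : ∀ q ∈ D, fderiv ℝ (fun x => z x 0) q (1,0) = y q 1 * fderiv ℝ f q (1,0) := by
    intro q hq; rw [hzw1 q hq 0, cross_apply]; simp
  have hzu1 : ∀ q ∈ D, fderiv ℝ (fun x => z x 1) q (1,0)
      = y q 2 - y q 0 * fderiv ℝ f q (1,0) := by
    intro q hq; rw [hzw1 q hq 1, cross_apply]; simp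
  have hzu2 : ∀ q ∈ D, fderiv ℝ (fun x => z x 2) q (1,0) = -(y q 1) := by
    intro q hq; rw [hzw1 q hq 2, cross_apply]; simp
  have hzv0 : ∀ q ∈ D, fderiv ℝ (fun x => z x 0) q (0,1)
      = y q 1 * fderiv ℝ f q (0,1) - y q 2 := by
    intro q hq; rw [hzw2 q hq 0, cross_apply]; simp
  have hzv1 : ∀ q ∈ D, fderiv ℝ (fun x => z x 1) q (0,1)
      = -(y q 0 * fderiv ℝ f q (0,1)) := by
    intro q hq; rw [hzw2 q hq 1, cross_apply]; simp
  have hzv2 : ∀ q ∈ D, fderiv ℝ (fun x => z x 2) q (0,1) = y q 0 := by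
    intro q hq; rw [hzw2 q hq 2, cross_apply]; simp
  -- differentiability of the first partials of f
  have hffd : DifferentiableAt ℝ (fderiv ℝ f) p :=
    ((hfc p hp).fderiv_right (m := 1) (WithTop.coe_le_coe.2 (le_top : ((1+1 : ℕ) : ℕ∞) ≤ ⊤))).differentiableAt one_ne_zero
  have hFud : DifferentiableAt ℝ (fun x => fderiv ℝ f x (1,0)) p :=
    hffd.clm_apply (differentiableAt_const _)
  have hFvd : DifferentiableAt ℝ (fun x => fderiv ℝ f x (0,1)) p :=
    hffd.clm_apply (differentiableAt_const _)
  -- shorthand differentiability at p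
  have hy0 := hyid 0 p hp
  have hy1 := hyid 1 p hp
  have hy2 := hyid 2 p hp
  have hz0 := hzid 0 p hp
  have hz1 := hzid 1 p hp
  have hz2 := hzid 2 p hp
  have hfp := hfd p hp
  have dfst : DifferentiableAt ℝ (fun x : ℝ × ℝ => x.1) p := differentiableAt_fst
  have dsnd : DifferentiableAt ℝ (fun x : ℝ × ℝ => x.2) p := differentiableAt_snd
  -- eventually-equal replacement of first partials of z
  have hev : ∀ (g₁ g₂ : ℝ × ℝ → ℝ), (∀ q ∈ D, g₁ q = g₂ q) →
      fderiv ℝ g₁ p = fderiv ℝ g₂ p := fun g₁ g₂ h =>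
    Filter.EventuallyEq.fderiv_eq (Filter.eventually_of_mem (hD.mem_nhds hp) h)
  -- the symmetry-of-second-derivative relations
  have hS := pd_symm ((hfc p hp).of_le (WithTop.coe_le_coe.2 (le_top : (2 : ℕ∞) ≤ ⊤))) (1,0) (0,1)
  have hA := pd_symm (hzic 2 p hp) (1,0) (0,1)
  rw [hev _ _ hzu2, hev _ _ hzv2] at hA
  simp only [pd_neg] at hA
  have hB := pd_symm (hzic 1 p hp) (1,0) (0,1)
  rw [hev _ _ hzu1, hev _ _ hzv1] at hB
  simp only [pd_sub hy2 (hy0.fun_mul hFud), pd_mul hy0 hFud, pd_neg,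
    pd_mul hy0 hFvd] at hB
  have hC := pd_symm (hzic 0 p hp) (1,0) (0,1)
  rw [hev _ _ hzu0, hev _ _ hzv0] at hC
  simp only [pd_mul hy1 hFud, pd_sub (hy1.fun_mul hFvd) hy2, pd_mul hy1 hFvd] at hC
  -- pointwise identities at p
  have e_av := hzv0 p hp
  have e_bu := hzu1 p hp
  have e_cu := hzu2 p hp
  have e_cv := hzv2 p hp
  -- rewrite the goal
  simp only [pdu, pdv]
  have hG1 : (fun q => s q 0 + fderiv ℝ f q (1,0) * s q 2) = fun q =>
      (z q 0 - (y q 1 * f q - y q 2 * q.2)) +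
        fderiv ℝ f q (1,0) * (z q 2 - (y q 0 * q.2 - y q 1 * q.1)) := by
    funext q
    rw [hsdef, hrdef, cross_apply]
    simp
  have hG2 : (fun q => s q 1 + fderiv ℝ f q (0,1) * s q 2) = fun q =>
      (z q 1 - (y q 2 * q.1 - y q 0 * f q)) +
        fderiv ℝ f q (0,1) * (z q 2 - (y q 0 * q.2 - y q 1 * q.1)) := by
    funext q
    rw [hsdef, hrdef, cross_apply]
    simp
  rw [hG1, hG2]
  have dInner : DifferentiableAt ℝ (fun x => z x 2 - (y x 0 * x.2 - y x 1 * x.1)) p :=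
    hz2.sub ((hy0.mul dsnd).sub (hy1.mul dfst))
  simp only [
    pd_add (hz0.fun_sub ((hy1.fun_mul hfp).fun_sub (hy2.fun_mul dsnd))) (hFud.fun_mul dInner),
    pd_add (hz1.fun_sub ((hy2.fun_mul dfst).fun_sub (hy0.fun_mul hfp))) (hFvd.fun_mul dInner),
    pd_sub hz0 ((hy1.fun_mul hfp).fun_sub (hy2.fun_mul dsnd)),
    pd_sub hz1 ((hy2.fun_mul dfst).fun_sub (hy0.fun_mul hfp)),
    pd_sub (hy1.fun_mul hfp) (hy2.fun_mul dsnd),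
    pd_sub (hy2.fun_mul dfst) (hy0.fun_mul hfp),
    pd_mul hy1 hfp, pd_mul hy2 dsnd, pd_mul hy2 dfst, pd_mul hy0 hfp,
    pd_mul hFud dInner, pd_mul hFvd dInner,
    pd_sub hz2 ((hy0.fun_mul dsnd).fun_sub (hy1.fun_mul dfst)),
    pd_sub (hy0.fun_mul dsnd) (hy1.fun_mul dfst),
    pd_mul hy0 dsnd, pd_mul hy1 dfst,
    pd_fst, pd_snd]
  linear_combination e_av - e_bu + fderiv ℝ f p (1,0) * e_cv - fderiv ℝ f p (0,1) * e_cu +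
    f p * hA + p.2 * hB + p.1 * hC +
    (z p 2 - (y p 0 * p.2 - y p 1 * p.1)) * hS + (y p 0 * p.2 - y p 1 * p.1) * hS
end
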